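/- Fix an integer n ≥ 1 and a sign ε_R ∈ {±1} for each dyadic rectangle R ⊂ [0,1]^2 with |R| = 2^{-n}. For 0 ≤ s ≤ n let ψ_s := Σ_{R : |R_1| = 2^{-s}, |R_2| = 2^{s−n}} ε_R h_R, and let Ψ := ∏_{s=0}^{n} (1 + ψ_s/2). Then: (i) Ψ(x) ≥ 0 for all x ∈ [0,1]^2; (ii) ∫_{[0,1]^2} Ψ dx = 1; and (iii) for every choice of real coefficients α(R) indexed by dyadic rectangles R ⊂ [0,1]^2 with |R| ≥ 2^{-n}, ∫_{[0,1]^2} ( Σ_{|R| ≥ 2^{-n}} α(R) h_R ) · Ψ dx = 2^{-n-1} Σ_{|R| = 2^{-n}} ε_R α(R). -/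

import Mathlib

open MeasureTheory
open scoped ENNReal Classical

/-- The `L^∞`-normalized Haar function of the dyadic interval `[j/2^k, (j+1)/2^k)`:
it is `-1` on the left half, `+1` on the right half, and `0` outside. -/
noncomputable def haar1 (k j : ℕ) (x : ℝ) : ℝ :=
  if (j : ℝ) / 2 ^ k ≤ x ∧ x < ((j : ℝ) + 1 / 2) / 2 ^ k then -1
  else if ((j : ℝ) + 1 / 2) / 2 ^ k ≤ x ∧ x < ((j : ℝ) + 1) / 2 ^ k then 1
  else 0

/-- A dyadic rectangle in `[0,1]^d` is encoded by its levels `R.1` and positions `R.2`;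
its `i`-th side interval is `[R.2 i / 2 ^ R.1 i, (R.2 i + 1) / 2 ^ R.1 i)`.
`haarR R` is the associated (tensor product) Haar function. -/
noncomputable def haarR {d : ℕ} (R : (Fin d → ℕ) × (Fin d → ℕ)) (x : Fin d → ℝ) : ℝ :=
  ∏ i, haar1 (R.1 i) (R.2 i) (x i)

/-- The dyadic rectangles in `[0,1]^d` of volume exactly `2 ^ (-n)`. -/
def rectsEq (d n : ℕ) : Finset ((Fin d → ℕ) × (Fin d → ℕ)) :=
  ((Fintype.piFinset fun _ => Finset.range (n + 1)) ×ˢ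
      (Fintype.piFinset fun _ => Finset.range (2 ^ n))).filter
    fun R => (∑ i, R.1 i) = n ∧ ∀ i, R.2 i < 2 ^ R.1 i

/-- The dyadic rectangles in `[0,1]^d` of volume at least `2 ^ (-n)`. -/
def rectsGe (d n : ℕ) : Finset ((Fin d → ℕ) × (Fin d → ℕ)) :=
  ((Fintype.piFinset fun _ => Finset.range (n + 1)) ×ˢ
      (Fintype.piFinset fun _ => Finset.range (2 ^ n))).filter
    fun R => (∑ i, R.1 i) ≤ n ∧ ∀ i, R.2 i < 2 ^ R.1 i

/-- The unit cube `[0,1]^d`. -/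
def unitCube (d : ℕ) : Set (Fin d → ℝ) := Set.univ.pi fun _ => Set.Icc 0 1

/-!
All Haar functions `h_R` with `|R| ≥ 2^{-n}` are constant on the dyadic squares of side
`2^{-(n+1)}`, so every integral in the theorem is an average of cell values, and everything
reduces to finite sums over cell indices.

Rectangles of one shape are pairwise disjoint, so `|ψ_s| ≤ 1` and every factor of `Ψ` is
positive. For the integrals, expand `Ψ = ∑_{T ⊆ {0,…,n}} ∏_{s ∈ T} ψ_s / 2`. A Haar function of
level `L` is orthogonal to every function constant on the dyadic intervals of length `2^{-L}`.
In `h_R ∏_{s ∈ T} ψ_s` the factor `ψ_s` has level `s` in the first variable and `n - s` in the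
second, so unless `T = {s}` and `R` has shape `2^{-s} × 2^{s-n}`, one factor (`ψ_{max T}` or
`h_R` in the first variable, `ψ_{min T}` in the second) is strictly finer than all others in its
variable, and the term integrates to zero. What survives is `T = ∅`, and `T = {s}` paired with
`R` itself, which contributes `ε_R 2^{-n-1}`.
-/

namespace DyadicHaar

open Finset

abbrev DyadicRect (d : ℕ) : Type := (Fin d → ℕ) × (Fin d → ℕ)

def dyadicCell (N c : ℕ) : Set ℝ := Set.Ico (c / 2 ^ N) ((c + 1) / 2 ^ N)

lemma mem_dyadicCell_iff {N c : ℕ} {x : ℝ} :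
    x ∈ dyadicCell N c ↔ 0 ≤ x ∧ ⌊2 ^ N * x⌋₊ = c := by
  have h2N : (0 : ℝ) < 2 ^ N := by positivity
  rw [dyadicCell, Set.mem_Ico, div_le_iff₀ h2N, lt_div_iff₀ h2N, mul_comm x]
  constructor
  · rintro ⟨h1, h2⟩
    have hx : 0 ≤ x := nonneg_of_mul_nonneg_right ((Nat.cast_nonneg c).trans h1) h2N
    exact ⟨hx, (Nat.floor_eq_iff (by positivity)).2 ⟨h1, h2⟩⟩
  · rintro ⟨hx, rfl⟩
    exact ⟨Nat.floor_le (by positivity), Nat.lt_floor_add_one _⟩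

lemma volume_dyadicCell (N c : ℕ) : volume (dyadicCell N c) = ENNReal.ofReal (2 ^ N)⁻¹ := by
  rw [dyadicCell, Real.volume_Ico]
  congr 1
  field_simp
  ring

def dyadicCells (d N : ℕ) : Finset (Fin d → ℕ) := Fintype.piFinset fun _ => range (2 ^ N)

def dyadicBox {d : ℕ} (N : ℕ) (c : Fin d → ℕ) : Set (Fin d → ℝ) :=
  Set.univ.pi fun i => dyadicCell N (c i)

lemma pi_Ico_eq_biUnion_dyadicBox (d N : ℕ) :
    (Set.univ.pi fun _ : Fin d => Set.Ico (0 : ℝ) 1) =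
      ⋃ c ∈ dyadicCells d N, dyadicBox N c := by
  ext x
  simp only [Set.mem_pi, Set.mem_univ, true_implies, Set.mem_Ico, Set.mem_iUnion, dyadicBox,
    dyadicCells, mem_dyadicCell_iff, Fintype.mem_piFinset, mem_range, exists_prop]
  constructor
  · intro hx
    refine ⟨fun i => ⌊2 ^ N * x i⌋₊, fun i => ?_, fun i => ⟨(hx i).1, rfl⟩⟩
    rw [Nat.floor_lt (by have := (hx i).1; positivity)]
    push_cast
    nlinarith [(hx i).2, pow_pos (two_pos (α := ℝ)) N]
  · rintro ⟨c, hc, hx⟩ i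
    refine ⟨(hx i).1, ?_⟩
    have := Nat.lt_floor_add_one (2 ^ N * x i)
    have h : (⌊2 ^ N * x i⌋₊ : ℝ) + 1 ≤ 2 ^ N := by
      rw [(hx i).2]; exact_mod_cast hc i
    nlinarith [pow_pos (two_pos (α := ℝ)) N]

lemma pairwiseDisjoint_dyadicBox (d N : ℕ) (s : Set (Fin d → ℕ)) :
    s.PairwiseDisjoint (dyadicBox N) := by
  intro c _ c' _ hcc'
  refine Set.disjoint_left.2 fun x hx hx' => hcc' (funext fun i => ?_)
  rw [← ((mem_dyadicCell_iff.1 (hx i trivial)).2), (mem_dyadicCell_iff.1 (hx' i trivial)).2]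

lemma volume_dyadicBox {d : ℕ} (N : ℕ) (c : Fin d → ℕ) :
    volume (dyadicBox N c) = ENNReal.ofReal (2 ^ N)⁻¹ ^ d := by
  simp [dyadicBox, volume_pi_pi, volume_dyadicCell]

lemma setIntegral_unitCube_eq_sum {d N : ℕ} (F : (Fin d → ℝ) → ℝ) (G : (Fin d → ℕ) → ℝ)
    (hFG : ∀ c ∈ dyadicCells d N, ∀ x ∈ dyadicBox N c, F x = G c) :
    ∫ x in unitCube d, F x = ((2 : ℝ) ^ N)⁻¹ ^ d * ∑ c ∈ dyadicCells d N, G c := by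
  have hae : unitCube d =ᵐ[volume] Set.univ.pi fun _ : Fin d => Set.Ico (0 : ℝ) 1 :=
    (Measure.pi_Ico_ae_eq_pi_Icc (μ := fun _ => volume)).symm
  have hmeas (c : Fin d → ℕ) : MeasurableSet (dyadicBox N c) :=
    MeasurableSet.univ_pi fun _ => measurableSet_Ico
  rw [setIntegral_congr_set hae, pi_Ico_eq_biUnion_dyadicBox d N,
    integral_biUnion_finset _ (fun c _ => hmeas c) (pairwiseDisjoint_dyadicBox d N _), mul_sum]
  refine sum_congr rfl fun c hc => ?_
  rw [setIntegral_congr_fun (hmeas c) (hFG c hc), setIntegral_const, measureReal_def,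
    volume_dyadicBox, ENNReal.toReal_pow, ENNReal.toReal_ofReal (by positivity), smul_eq_mul]
  · refine fun c hc => (integrableOn_congr_fun (hFG c hc) (hmeas c)).2 ?_
    exact integrableOn_const (by simp [volume_dyadicBox])

def haarSign (j q : ℕ) : ℝ := if q = 2 * j then -1 else if q = 2 * j + 1 then 1 else 0

lemma haar1_eq_haarSign_floor {k j : ℕ} {x : ℝ} (hx : 0 ≤ x) :
    haar1 k j x = haarSign j ⌊2 ^ (k + 1) * x⌋₊ := by
  have h2k : (0 : ℝ) < 2 ^ k := by positivity
  have h2 : (2 : ℝ) ^ (k + 1) * x = 2 * (x * 2 ^ k) := by ring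
  have hlo : ((j : ℝ) / 2 ^ k ≤ x ∧ x < ((j : ℝ) + 1 / 2) / 2 ^ k) ↔
      ⌊2 ^ (k + 1) * x⌋₊ = 2 * j := by
    rw [Nat.floor_eq_iff (by positivity), h2, div_le_iff₀ h2k, lt_div_iff₀ h2k]
    push_cast
    constructor <;> rintro ⟨h, h'⟩ <;> constructor <;> linarith
  have hhi : (((j : ℝ) + 1 / 2) / 2 ^ k ≤ x ∧ x < ((j : ℝ) + 1) / 2 ^ k) ↔
      ⌊2 ^ (k + 1) * x⌋₊ = 2 * j + 1 := by
    rw [Nat.floor_eq_iff (by positivity), h2, div_le_iff₀ h2k, lt_div_iff₀ h2k]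
    push_cast
    constructor <;> rintro ⟨h, h'⟩ <;> constructor <;> linarith
  simp only [haar1, haarSign, hlo, hhi]

def discreteHaar (N k j c : ℕ) : ℝ := haarSign j (c / 2 ^ (N - k - 1))

lemma haar1_eq_discreteHaar {N k j c : ℕ} {x : ℝ} (hk : k < N) (hx : x ∈ dyadicCell N c) :
    haar1 k j x = discreteHaar N k j c := by
  obtain ⟨hx0, rfl⟩ := mem_dyadicCell_iff.1 hx
  obtain ⟨m, rfl⟩ : ∃ m, N = k + 1 + m := ⟨N - k - 1, by omega⟩
  rw [haar1_eq_haarSign_floor hx0, discreteHaar, show k + 1 + m - k - 1 = m by omega,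
    ← Nat.floor_div_natCast]
  congr 2
  push_cast
  field_simp
  ring

def discreteHaarR {d : ℕ} (N : ℕ) (R : DyadicRect d) (c : Fin d → ℕ) : ℝ :=
  ∏ i, discreteHaar N (R.1 i) (R.2 i) (c i)

lemma haarR_eq_discreteHaarR {d N : ℕ} {R : DyadicRect d} {c : Fin d → ℕ}
    {x : Fin d → ℝ} (hR : ∀ i, R.1 i < N) (hx : x ∈ dyadicBox N c) :
    haarR R x = discreteHaarR N R c :=
  prod_congr rfl fun i _ => haar1_eq_discreteHaar (hR i) (hx i trivial)

lemma sum_range_mul_comp_div (a b : ℕ) (φ : ℕ → ℝ) :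
    ∑ c ∈ range (a * b), φ (c / b) = b * ∑ q ∈ range a, φ q := by
  induction a with
  | zero => simp
  | succ a ih =>
    rw [add_one_mul, sum_range_add, ih, sum_range_succ, mul_add]
    congr 1
    rw [sum_congr rfl fun r hr => by
      rw [add_comm, Nat.add_mul_div_right _ _ (Nat.zero_lt_of_lt (mem_range.1 hr)),
        Nat.div_eq_of_lt (mem_range.1 hr), zero_add], sum_const, card_range, nsmul_eq_mul]

lemma sum_haarSign_mul (a j : ℕ) (G : ℕ → ℝ) :
    ∑ q ∈ range (2 * a), haarSign j q * G q =
      if j < a then G (2 * j + 1) - G (2 * j) else 0 := by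
  have h (q : ℕ) : haarSign j q * G q =
      (if 2 * j + 1 = q then G (2 * j + 1) else 0) - (if 2 * j = q then G (2 * j) else 0) := by
    unfold haarSign; split_ifs <;> (try subst_vars) <;> first | omega | ring1
  simp only [h, sum_sub_distrib, sum_ite_eq, mem_range]
  split_ifs <;> first | omega | ring1

lemma sum_discreteHaar_mul {N k : ℕ} (hk : k < N) (j : ℕ) (G : ℕ → ℝ) :
    ∑ c ∈ range (2 ^ N), discreteHaar N k j c * G (c / 2 ^ (N - k - 1)) =
      2 ^ (N - k - 1) * if j < 2 ^ k then G (2 * j + 1) - G (2 * j) else 0 := by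
  rw [show 2 ^ N = 2 * 2 ^ k * 2 ^ (N - k - 1) by rw [← pow_succ', ← pow_add]; congr 1; omega]
  refine (sum_range_mul_comp_div (2 * 2 ^ k) _ fun q => haarSign j q * G q).trans ?_
  rw [sum_haarSign_mul]
  push_cast
  rfl

/-- Functions of a level-`N` cell index that only depend on the level-`L` cell containing it. -/
def blockConst (N L : ℕ) : Subalgebra ℝ (ℕ → ℝ) where
  carrier := {g | ∀ c c', c / 2 ^ (N - L) = c' / 2 ^ (N - L) → g c = g c'}
  mul_mem' hf hg c c' h := by simp only [Pi.mul_apply, hf c c' h, hg c c' h]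
  add_mem' hf hg c c' h := by simp only [Pi.add_apply, hf c c' h, hg c c' h]
  algebraMap_mem' _ _ _ _ := rfl

lemma blockConst_mono {N L L' : ℕ} (hL : L ≤ L') (hL' : L' ≤ N) :
    blockConst N L ≤ blockConst N L' := by
  intro g hg c c' h
  refine hg c c' ?_
  rw [show N - L = (N - L') + (L' - L) by omega, pow_add, ← Nat.div_div_eq_div_mul,
    ← Nat.div_div_eq_div_mul, h]

lemma discreteHaar_congr {N k c c' : ℕ} (h : c / 2 ^ (N - (k + 1)) = c' / 2 ^ (N - (k + 1)))
    (j : ℕ) : discreteHaar N k j c = discreteHaar N k j c' := by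
  rw [discreteHaar, discreteHaar, Nat.sub_sub, h]

lemma discreteHaar_mem_blockConst (N k j : ℕ) : discreteHaar N k j ∈ blockConst N (k + 1) :=
  fun _ _ h => discreteHaar_congr h j

/-- Equivalently: functions with mean zero on every level-`L` cell. -/
def blockOrth (N L : ℕ) : Submodule ℝ (ℕ → ℝ) where
  carrier := {f | ∀ g ∈ blockConst N L, ∑ c ∈ range (2 ^ N), f c * g c = 0}
  add_mem' hf hg g hg' := by
    simp only [Pi.add_apply, add_mul, sum_add_distrib, hf g hg', hg g hg', add_zero]
  zero_mem' g _ := by simp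
  smul_mem' a f hf g hg := by
    simp only [Pi.smul_apply, smul_eq_mul, mul_assoc, ← mul_sum, hf g hg, mul_zero]

lemma discreteHaar_mem_blockOrth {N L : ℕ} (hL : L < N) (j : ℕ) :
    discreteHaar N L j ∈ blockOrth N L := by
  intro g hg
  set b := 2 ^ (N - L - 1)
  have h2b : 2 ^ (N - L) = b * 2 := by rw [← pow_succ]; congr 1; omega
  have hg' (c : ℕ) : g c = g (c / b * b) := by
    refine hg c _ ?_
    rw [h2b, ← Nat.div_div_eq_div_mul, ← Nat.div_div_eq_div_mul,
      Nat.mul_div_cancel _ (by positivity)]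
  have hgj : g ((2 * j + 1) * b) = g (2 * j * b) := by
    refine hg _ _ ?_
    rw [h2b, ← Nat.div_div_eq_div_mul, ← Nat.div_div_eq_div_mul,
      Nat.mul_div_cancel _ (by positivity), Nat.mul_div_cancel _ (by positivity)]
    omega
  refine (sum_congr rfl fun c _ => congrArg _ (hg' c)).trans ?_
  refine (sum_discreteHaar_mul hL j fun q => g (q * b)).trans ?_
  rw [hgj, sub_self, ite_self, mul_zero]

lemma mul_mem_blockOrth {N L : ℕ} {f g : ℕ → ℝ} (hf : f ∈ blockOrth N L)
    (hg : g ∈ blockConst N L) : f * g ∈ blockOrth N L := fun h hh => by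
  simpa only [Pi.mul_apply, mul_assoc] using hf (g * h) (mul_mem hg hh)

lemma sum_eq_zero_of_mem_blockOrth {N L : ℕ} {f : ℕ → ℝ} (hf : f ∈ blockOrth N L) :
    ∑ c ∈ range (2 ^ N), f c = 0 := by
  simpa using hf 1 (one_mem _)

lemma sum_discreteHaar_mul_discreteHaar {N k j : ℕ} (hk : k < N) (hj : j < 2 ^ k) (j' : ℕ) :
    ∑ c ∈ range (2 ^ N), discreteHaar N k j c * discreteHaar N k j' c =
      if j = j' then 2 ^ (N - k) else 0 := by
  refine (sum_discreteHaar_mul hk j (haarSign j')).trans ?_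
  rw [if_pos hj]
  have h2 : (2 : ℝ) ^ (N - k) = 2 ^ (N - k - 1) * 2 := by rw [← pow_succ]; congr 1; omega
  unfold haarSign
  split_ifs <;> first | omega | (rw [h2]; ring1) | ring1

lemma sum_discreteHaar_mul_discreteHaar_of_lt {N k k' : ℕ} (hk : k < k') (hk' : k' < N)
    (j j' : ℕ) : ∑ c ∈ range (2 ^ N), discreteHaar N k j c * discreteHaar N k' j' c = 0 := by
  simp_rw [mul_comm (discreteHaar N k j _)]
  exact discreteHaar_mem_blockOrth hk' j' _
    (blockConst_mono hk hk'.le (discreteHaar_mem_blockConst N k j))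

lemma sum_discreteHaarR_mul_discreteHaarR {d : ℕ} (N : ℕ) (R R' : DyadicRect d) :
    ∑ c ∈ dyadicCells d N, discreteHaarR N R c * discreteHaarR N R' c =
      ∏ i, ∑ c ∈ range (2 ^ N),
        discreteHaar N (R.1 i) (R.2 i) c * discreteHaar N (R'.1 i) (R'.2 i) c := by
  simp only [discreteHaarR, ← prod_mul_distrib, dyadicCells]
  exact (prod_univ_sum (ι := Fin d) (fun _ => range (2 ^ N))
    fun i c => discreteHaar N (R.1 i) (R.2 i) c * discreteHaar N (R'.1 i) (R'.2 i) c).symm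

lemma sum_discreteHaarR_mul_discreteHaarR_of_fst_eq {d N : ℕ} {R R' : DyadicRect d}
    (h : R'.1 = R.1) (hN : ∀ i, R.1 i < N) (hpos : ∀ i, R.2 i < 2 ^ R.1 i) :
    ∑ c ∈ dyadicCells d N, discreteHaarR N R c * discreteHaarR N R' c =
      if R' = R then ∏ i, (2 : ℝ) ^ (N - R.1 i) else 0 := by
  simp only [sum_discreteHaarR_mul_discreteHaarR, h,
    sum_discreteHaar_mul_discreteHaar (hN _) (hpos _), Fintype.prod_ite_zero]
  congr 1
  simp [Prod.ext_iff, h, funext_iff, eq_comm]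

lemma rectsEq_subset_rectsGe (d n : ℕ) : rectsEq d n ⊆ rectsGe d n := fun R hR => by
  simp only [rectsEq, rectsGe, mem_filter] at hR ⊢
  exact ⟨hR.1, hR.2.1.le, hR.2.2⟩

lemma le_of_mem_rectsGe {d n : ℕ} {R : DyadicRect d} (hR : R ∈ rectsGe d n)
    (i : Fin d) : R.1 i ≤ n := by
  simp only [rectsGe, mem_filter, mem_product, Fintype.mem_piFinset, mem_range] at hR
  exact Nat.lt_succ_iff.1 (hR.1.1 i)

lemma pos_lt_of_mem_rectsGe {d n : ℕ} {R : DyadicRect d} (hR : R ∈ rectsGe d n)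
    (i : Fin d) : R.2 i < 2 ^ R.1 i :=
  (mem_filter.1 hR).2.2 i

lemma add_le_of_mem_rectsGe {n : ℕ} {R : DyadicRect 2} (hR : R ∈ rectsGe 2 n) :
    R.1 0 + R.1 1 ≤ n := by
  simpa [Fin.sum_univ_two] using (mem_filter.1 hR).2.1

def hypLayer (n s : ℕ) : Finset (DyadicRect 2) :=
  (rectsEq 2 n).filter fun R => R.1 0 = s ∧ R.1 1 = n - s

lemma mem_hypLayer {n s : ℕ} {R : DyadicRect 2} :
    R ∈ hypLayer n s ↔ R ∈ rectsEq 2 n ∧ R.1 0 = s ∧ R.1 1 = n - s :=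
  mem_filter

lemma mem_hypLayer_self {n : ℕ} {R : DyadicRect 2} :
    R ∈ hypLayer n (R.1 0) ↔ R ∈ rectsEq 2 n := by
  rw [mem_hypLayer]
  refine ⟨fun h => h.1, fun h => ⟨h, rfl, ?_⟩⟩
  have := (mem_filter.1 h).2.1
  rw [Fin.sum_univ_two] at this
  omega

def layerSum (n s : ℕ) (ε H : DyadicRect 2 → ℝ) : ℝ :=
  ∑ R ∈ hypLayer n s, ε R * H R

noncomputable def rieszProduct (n : ℕ) (ε H : DyadicRect 2 → ℝ) : ℝ :=
  ∏ s ∈ range (n + 1), (1 + layerSum n s ε H / 2)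

lemma rieszProduct_congr {n : ℕ} {ε H H' : DyadicRect 2 → ℝ}
    (h : ∀ R ∈ rectsEq 2 n, H R = H' R) : rieszProduct n ε H = rieszProduct n ε H' := by
  unfold rieszProduct layerSum
  refine prod_congr rfl fun s _ => ?_
  rw [sum_congr rfl fun R hR => by rw [h R (mem_hypLayer.1 hR).1]]

lemma rieszProduct_eq_sum_powerset (n : ℕ) (ε H : DyadicRect 2 → ℝ) :
    rieszProduct n ε H =
      ∑ T ∈ (range (n + 1)).powerset, ∏ s ∈ T, layerSum n s (fun R => ε R / 2) H := by
  simp only [rieszProduct, layerSum, sum_div, div_mul_eq_mul_div, prod_one_add]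

lemma abs_haarR_le_one {d : ℕ} (R : DyadicRect d) (x : Fin d → ℝ) :
    |haarR R x| ≤ 1 := by
  rw [haarR, abs_prod]
  exact prod_le_one (fun _ _ => abs_nonneg _) fun i _ => by
    unfold haar1; split_ifs <;> norm_num

lemma floor_eq_of_haar1_ne_zero {k j : ℕ} {x : ℝ} (h : haar1 k j x ≠ 0) :
    ⌊2 ^ k * x⌋₊ = j := by
  have h2k : (0 : ℝ) < 2 ^ k := by positivity
  refine (mem_dyadicCell_iff.1 ?_).2
  unfold haar1 at h
  split_ifs at h with h1 h2
  · exact ⟨h1.1, h1.2.trans_le (div_le_div_of_nonneg_right (by linarith) h2k.le)⟩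
  · exact ⟨(div_le_div_of_nonneg_right (by linarith) h2k.le).trans h2.1, h2.2⟩
  · exact absurd rfl h

lemma abs_sum_haarR_le_one {d : ℕ} (S : Finset (DyadicRect d))
    (hS : ∀ R ∈ S, ∀ R' ∈ S, R.1 = R'.1) (ε : DyadicRect d → ℝ)
    (hε : ∀ R ∈ S, |ε R| ≤ 1) (x : Fin d → ℝ) : |∑ R ∈ S, ε R * haarR R x| ≤ 1 := by
  by_cases h : ∃ R₀ ∈ S, haarR R₀ x ≠ 0
  · obtain ⟨R₀, hR₀, hne⟩ := h
    rw [sum_eq_single_of_mem R₀ hR₀ fun R hR hRR₀ => ?_, abs_mul]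
    · exact mul_le_one₀ (hε R₀ hR₀) (abs_nonneg _) (abs_haarR_le_one R₀ x)
    · by_contra hterm
      have hne' := right_ne_zero_of_mul hterm
      rw [haarR, prod_ne_zero_iff] at hne hne'
      refine hRR₀ (Prod.ext (hS R hR R₀ hR₀) (funext fun i => ?_))
      rw [← floor_eq_of_haar1_ne_zero (hne' i (mem_univ i)), hS R hR R₀ hR₀,
        floor_eq_of_haar1_ne_zero (hne i (mem_univ i))]
  · push Not at h
    rw [sum_eq_zero fun R hR => by rw [h R hR, mul_zero], abs_zero]
    exact zero_le_one

lemma rieszProduct_nonneg {n : ℕ} {ε : DyadicRect 2 → ℝ}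
    (hε : ∀ R ∈ rectsEq 2 n, |ε R| ≤ 1) (x : Fin 2 → ℝ) :
    0 ≤ rieszProduct n ε fun R => haarR R x := by
  refine prod_nonneg fun s _ => ?_
  have hS : ∀ R ∈ hypLayer n s, ∀ R' ∈ hypLayer n s, R.1 = R'.1 := fun R hR R' hR' => by
    rw [mem_hypLayer] at hR hR'
    ext i; fin_cases i <;> simp [hR.2, hR'.2]
  have := abs_le.1 (abs_sum_haarR_le_one _ hS ε (fun R hR => hε R (mem_hypLayer.1 hR).1) x)
  unfold layerSum
  linarith

lemma sum_dyadicCells_two (N : ℕ) (F : (Fin 2 → ℕ) → ℝ) :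
    ∑ c ∈ dyadicCells 2 N, F c = ∑ c₁ ∈ range (2 ^ N), ∑ c₂ ∈ range (2 ^ N), F ![c₁, c₂] := by
  rw [← sum_product']
  have hc (c : Fin 2 → ℕ) : ![c 0, c 1] = c := funext (Fin.forall_fin_two.2 ⟨rfl, rfl⟩)
  refine sum_nbij' (fun c => (c 0, c 1)) (fun p => ![p.1, p.2]) ?_ ?_ ?_ ?_ ?_ <;>
    simp [dyadicCells, Fin.forall_fin_two, hc]

lemma discreteHaarR_two (N : ℕ) (R : DyadicRect 2) (c₁ c₂ : ℕ) :
    discreteHaarR N R ![c₁, c₂] =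
      discreteHaar N (R.1 0) (R.2 0) c₁ * discreteHaar N (R.1 1) (R.2 1) c₂ := by
  simp [discreteHaarR, Fin.prod_univ_two]

lemma layerSum_discreteHaarR_two (N n s : ℕ) (ε : DyadicRect 2 → ℝ) (c₁ c₂ : ℕ) :
    layerSum n s ε (discreteHaarR N · ![c₁, c₂]) = ∑ R ∈ hypLayer n s,
      ε R * discreteHaar N s (R.2 0) c₁ * discreteHaar N (n - s) (R.2 1) c₂ := by
  refine sum_congr rfl fun R hR => ?_
  obtain ⟨-, h₀, h₁⟩ := mem_hypLayer.1 hR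
  dsimp only
  rw [discreteHaarR_two, h₀, h₁, mul_assoc]

section TwoDim

variable {N n : ℕ} {ε : DyadicRect 2 → ℝ}

lemma sum_dyadicCells_two_eq_zero_of_fst {L : ℕ} {F : (Fin 2 → ℕ) → ℝ}
    (hF : ∀ c₂, (fun c₁ => F ![c₁, c₂]) ∈ blockOrth N L) : ∑ c ∈ dyadicCells 2 N, F c = 0 := by
  rw [sum_dyadicCells_two, sum_comm]
  exact sum_eq_zero fun c₂ _ => sum_eq_zero_of_mem_blockOrth (hF c₂)

lemma sum_dyadicCells_two_eq_zero_of_snd {L : ℕ} {F : (Fin 2 → ℕ) → ℝ}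
    (hF : ∀ c₁, (fun c₂ => F ![c₁, c₂]) ∈ blockOrth N L) : ∑ c ∈ dyadicCells 2 N, F c = 0 := by
  rw [sum_dyadicCells_two]
  exact sum_eq_zero fun c₁ _ => sum_eq_zero_of_mem_blockOrth (hF c₁)

lemma layerSum_mem_blockConst_fst (s c₂ : ℕ) :
    (fun c₁ => layerSum n s ε (discreteHaarR N · ![c₁, c₂])) ∈ blockConst N (s + 1) :=
  fun c c' h => by simp only [layerSum_discreteHaarR_two, discreteHaar_congr h]

lemma layerSum_mem_blockConst_snd (s c₁ : ℕ) :
    (fun c₂ => layerSum n s ε (discreteHaarR N · ![c₁, c₂])) ∈ blockConst N (n - s + 1) :=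
  fun c c' h => by simp only [layerSum_discreteHaarR_two, discreteHaar_congr h]

lemma layerSum_mem_blockOrth_fst {s : ℕ} (hs : s < N) (c₂ : ℕ) :
    (fun c₁ => layerSum n s ε (discreteHaarR N · ![c₁, c₂])) ∈ blockOrth N s := by
  have : (fun c₁ => layerSum n s ε (discreteHaarR N · ![c₁, c₂])) = ∑ R ∈ hypLayer n s,
      (ε R * discreteHaar N (n - s) (R.2 1) c₂) • discreteHaar N s (R.2 0) := by
    ext c₁
    simp only [layerSum_discreteHaarR_two, Finset.sum_apply, Pi.smul_apply, smul_eq_mul]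
    exact sum_congr rfl fun R _ => by ring
  rw [this]
  exact Submodule.sum_mem _ fun R _ => Submodule.smul_mem _ _ (discreteHaar_mem_blockOrth hs _)

lemma layerSum_mem_blockOrth_snd {s : ℕ} (hs : n - s < N) (c₁ : ℕ) :
    (fun c₂ => layerSum n s ε (discreteHaarR N · ![c₁, c₂])) ∈ blockOrth N (n - s) := by
  have : (fun c₂ => layerSum n s ε (discreteHaarR N · ![c₁, c₂])) = ∑ R ∈ hypLayer n s,
      (ε R * discreteHaar N s (R.2 0) c₁) • discreteHaar N (n - s) (R.2 1) := by
    ext c₂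
    simp only [layerSum_discreteHaarR_two, Finset.sum_apply, Pi.smul_apply, smul_eq_mul]
  rw [this]
  exact Submodule.sum_mem _ fun R _ => Submodule.smul_mem _ _ (discreteHaar_mem_blockOrth hs _)

lemma prod_layerSum_mem_blockConst_fst {T : Finset ℕ} {L : ℕ} (hT : ∀ s ∈ T, s < L)
    (hL : L ≤ N) (c₂ : ℕ) :
    (fun c₁ => ∏ s ∈ T, layerSum n s ε (discreteHaarR N · ![c₁, c₂])) ∈ blockConst N L := by
  rw [← prod_fn]
  exact prod_mem fun s hs => blockConst_mono (hT s hs) hL (layerSum_mem_blockConst_fst s c₂)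

lemma prod_layerSum_mem_blockConst_snd {T : Finset ℕ} {L : ℕ} (hT : ∀ s ∈ T, n - s < L)
    (hL : L ≤ N) (c₁ : ℕ) :
    (fun c₂ => ∏ s ∈ T, layerSum n s ε (discreteHaarR N · ![c₁, c₂])) ∈ blockConst N L := by
  rw [← prod_fn]
  exact prod_mem fun s hs => blockConst_mono (hT s hs) hL (layerSum_mem_blockConst_snd s c₁)

lemma discreteHaarR_mem_blockConst_fst (R : DyadicRect 2) (c₂ : ℕ) :
    (fun c₁ => discreteHaarR N R ![c₁, c₂]) ∈ blockConst N (R.1 0 + 1) :=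
  fun c c' h => by simp only [discreteHaarR_two, discreteHaar_congr h]

lemma discreteHaarR_mem_blockConst_snd (R : DyadicRect 2) (c₁ : ℕ) :
    (fun c₂ => discreteHaarR N R ![c₁, c₂]) ∈ blockConst N (R.1 1 + 1) :=
  fun c c' h => by simp only [discreteHaarR_two, discreteHaar_congr h]

lemma sum_mul_prod_layerSum_eq_zero_of_max {T : Finset ℕ} {L : ℕ} (hL : L ∈ T)
    (hmax : ∀ s ∈ T, s ≤ L) (hLN : L < N) (G : (Fin 2 → ℕ) → ℝ)
    (hG : ∀ c₂, (fun c₁ => G ![c₁, c₂]) ∈ blockConst N L) :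
    ∑ c ∈ dyadicCells 2 N, G c * ∏ s ∈ T, layerSum n s ε (discreteHaarR N · c) = 0 := by
  refine sum_dyadicCells_two_eq_zero_of_fst (L := L) fun c₂ => ?_
  have hlt : ∀ s ∈ T.erase L, s < L := fun s hs =>
    (hmax s (mem_of_mem_erase hs)).lt_of_ne (ne_of_mem_erase hs)
  have : (fun c₁ => G ![c₁, c₂] * ∏ s ∈ T, layerSum n s ε (discreteHaarR N · ![c₁, c₂])) =
      (fun c₁ => layerSum n L ε (discreteHaarR N · ![c₁, c₂])) * ((fun c₁ => G ![c₁, c₂]) *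
        fun c₁ => ∏ s ∈ T.erase L, layerSum n s ε (discreteHaarR N · ![c₁, c₂])) := by
    ext c₁
    simp only [Pi.mul_apply, ← mul_prod_erase T _ hL]
    ring
  rw [this]
  exact mul_mem_blockOrth (layerSum_mem_blockOrth_fst hLN c₂)
    (mul_mem (hG c₂) (prod_layerSum_mem_blockConst_fst hlt hLN.le c₂))

lemma sum_mul_prod_layerSum_eq_zero_of_min {T : Finset ℕ} {m : ℕ} (hm : m ∈ T)
    (hmin : ∀ s ∈ T, m ≤ s) (hTn : ∀ s ∈ T, s ≤ n) (hN : n < N) (G : (Fin 2 → ℕ) → ℝ)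
    (hG : ∀ c₁, (fun c₂ => G ![c₁, c₂]) ∈ blockConst N (n - m)) :
    ∑ c ∈ dyadicCells 2 N, G c * ∏ s ∈ T, layerSum n s ε (discreteHaarR N · c) = 0 := by
  refine sum_dyadicCells_two_eq_zero_of_snd (L := n - m) fun c₁ => ?_
  have hlt : ∀ s ∈ T.erase m, n - s < n - m := fun s hs => by
    have := (hmin s (mem_of_mem_erase hs)).lt_of_ne (ne_of_mem_erase hs).symm
    have := hTn s (mem_of_mem_erase hs)
    omega
  have : (fun c₂ => G ![c₁, c₂] * ∏ s ∈ T, layerSum n s ε (discreteHaarR N · ![c₁, c₂])) =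
      (fun c₂ => layerSum n m ε (discreteHaarR N · ![c₁, c₂])) * ((fun c₂ => G ![c₁, c₂]) *
        fun c₂ => ∏ s ∈ T.erase m, layerSum n s ε (discreteHaarR N · ![c₁, c₂])) := by
    ext c₂
    simp only [Pi.mul_apply, ← mul_prod_erase T _ hm]
    ring
  rw [this]
  exact mul_mem_blockOrth (layerSum_mem_blockOrth_snd (by omega) c₁)
    (mul_mem (hG c₁) (prod_layerSum_mem_blockConst_snd hlt (by omega) c₁))

lemma sum_discreteHaarR_mul_prod_layerSum_eq_zero_of_lt {R : DyadicRect 2}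
    {T : Finset ℕ} (hT : ∀ s ∈ T, s < R.1 0) (hR : R.1 0 < N) :
    ∑ c ∈ dyadicCells 2 N,
      discreteHaarR N R c * ∏ s ∈ T, layerSum n s ε (discreteHaarR N · c) = 0 := by
  refine sum_dyadicCells_two_eq_zero_of_fst (L := R.1 0) fun c₂ => ?_
  have : (fun c₁ => discreteHaarR N R ![c₁, c₂] *
        ∏ s ∈ T, layerSum n s ε (discreteHaarR N · ![c₁, c₂])) =
      discreteHaar N (R.1 0) (R.2 0) * ((fun _ => discreteHaar N (R.1 1) (R.2 1) c₂) *
        fun c₁ => ∏ s ∈ T, layerSum n s ε (discreteHaarR N · ![c₁, c₂])) := by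
    ext c₁
    simp only [Pi.mul_apply, discreteHaarR_two]
    ring
  rw [this]
  exact mul_mem_blockOrth (discreteHaar_mem_blockOrth hR _)
    (mul_mem (fun _ _ _ => rfl) (prod_layerSum_mem_blockConst_fst hT hR.le c₂))

lemma sum_discreteHaarR_mul_discreteHaarR_of_mem_hypLayer {R R' : DyadicRect 2}
    (hR : R ∈ rectsGe 2 n) (hN : n < N) (hR' : R' ∈ hypLayer n (R.1 0)) :
    ∑ c ∈ dyadicCells 2 N, discreteHaarR N R c * discreteHaarR N R' c =
      if R' = R then 2 ^ (2 * N - n) else 0 := by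
  have hRn := add_le_of_mem_rectsGe hR
  obtain ⟨-, h₀, h₁⟩ := mem_hypLayer.1 hR'
  by_cases hk : R.1 1 = n - R.1 0
  · have h : R'.1 = R.1 := funext (Fin.forall_fin_two.2 ⟨h₀, h₁.trans hk.symm⟩)
    have hRN (i : Fin 2) : R.1 i < N := (le_of_mem_rectsGe hR i).trans_lt hN
    rw [sum_discreteHaarR_mul_discreteHaarR_of_fst_eq h hRN (pos_lt_of_mem_rectsGe hR),
      Fin.prod_univ_two, ← pow_add]
    congr 3
    omega
  · have hne : R' ≠ R := fun h => hk (h ▸ h₁)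
    rw [if_neg hne, sum_discreteHaarR_mul_discreteHaarR, Fin.prod_univ_two, h₁,
      sum_discreteHaar_mul_discreteHaar_of_lt (k := R.1 1) (k' := n - R.1 0) (by omega)
        (by omega), mul_zero]

lemma sum_discreteHaarR_mul_layerSum {R : DyadicRect 2} (hR : R ∈ rectsGe 2 n)
    (hN : n < N) :
    ∑ c ∈ dyadicCells 2 N, discreteHaarR N R c * layerSum n (R.1 0) ε (discreteHaarR N · c) =
      if R ∈ rectsEq 2 n then ε R * 2 ^ (2 * N - n) else 0 :=
  calc ∑ c ∈ dyadicCells 2 N, discreteHaarR N R c * layerSum n (R.1 0) ε (discreteHaarR N · c)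
      = ∑ R' ∈ hypLayer n (R.1 0),
          ε R' * ∑ c ∈ dyadicCells 2 N, discreteHaarR N R c * discreteHaarR N R' c := by
        simp only [layerSum, mul_sum]
        rw [sum_comm]
        exact sum_congr rfl fun _ _ => sum_congr rfl fun _ _ => by ring
    _ = ∑ R' ∈ hypLayer n (R.1 0), if R' = R then ε R' * 2 ^ (2 * N - n) else 0 :=
        sum_congr rfl fun R' hR' => by
          rw [sum_discreteHaarR_mul_discreteHaarR_of_mem_hypLayer hR hN hR', mul_ite, mul_zero]
    _ = if R ∈ rectsEq 2 n then ε R * 2 ^ (2 * N - n) else 0 := by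
        simp only [sum_ite_eq', mem_hypLayer_self]

lemma sum_discreteHaarR_mul_prod_layerSum_eq_zero {R : DyadicRect 2}
    (hR : R ∈ rectsGe 2 n) (hN : n < N) {T : Finset ℕ} (hT : T ⊆ range (n + 1))
    (hTR : T ≠ {R.1 0}) :
    ∑ c ∈ dyadicCells 2 N,
      discreteHaarR N R c * ∏ s ∈ T, layerSum n s ε (discreteHaarR N · c) = 0 := by
  have hRn := add_le_of_mem_rectsGe hR
  have hTn : ∀ s ∈ T, s ≤ n := fun s hs => Nat.lt_succ_iff.1 (mem_range.1 (hT hs))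
  by_cases hgt : ∃ s ∈ T, R.1 0 < s
  · obtain ⟨s, hs, hlt⟩ := hgt
    obtain ⟨L, hL, hmax⟩ := T.exists_max_image (fun s => s) ⟨s, hs⟩
    exact sum_mul_prod_layerSum_eq_zero_of_max hL hmax (by linarith [hTn L hL]) _ fun c₂ =>
      blockConst_mono (by linarith [hmax s hs]) (by linarith [hTn L hL])
        (discreteHaarR_mem_blockConst_fst R c₂)
  push Not at hgt
  by_cases hk : R.1 0 ∈ T
  · obtain ⟨m, hm, hmin⟩ := T.exists_min_image (fun s => s) ⟨_, hk⟩
    have hmk : m < R.1 0 := by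
      refine (hgt m hm).lt_of_ne fun hmk => hTR (eq_singleton_iff_unique_mem.2 ⟨hk, ?_⟩)
      exact fun s hs => le_antisymm (hgt s hs) (hmk ▸ hmin s hs)
    exact sum_mul_prod_layerSum_eq_zero_of_min hm hmin hTn hN _ fun c₁ =>
      blockConst_mono (by omega) (by omega) (discreteHaarR_mem_blockConst_snd R c₁)
  · exact sum_discreteHaarR_mul_prod_layerSum_eq_zero_of_lt
      (fun s hs => (hgt s hs).lt_of_ne fun h => hk (h ▸ hs)) (by omega)

lemma sum_discreteHaarR_mul_rieszProduct {R : DyadicRect 2}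
    (hR : R ∈ rectsGe 2 n) (hN : n < N) :
    ∑ c ∈ dyadicCells 2 N, discreteHaarR N R c * rieszProduct n ε (discreteHaarR N · c) =
      if R ∈ rectsEq 2 n then ε R * 2 ^ (2 * N - n - 1) else 0 := by
  have hR0 : R.1 0 ∈ range (n + 1) := mem_range.2 (by linarith [add_le_of_mem_rectsGe hR])
  simp only [rieszProduct_eq_sum_powerset, mul_sum]
  rw [sum_comm, sum_eq_single_of_mem {R.1 0} (by simpa using hR0) fun T hT hTR =>
    sum_discreteHaarR_mul_prod_layerSum_eq_zero hR hN (mem_powerset.1 hT) hTR]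
  simp only [prod_singleton]
  rw [sum_discreteHaarR_mul_layerSum hR hN]
  have h2 : (2 : ℝ) ^ (2 * N - n) = 2 * 2 ^ (2 * N - n - 1) := by
    rw [← pow_succ']; congr 1; omega
  split_ifs
  · rw [h2]; ring
  · rfl

lemma sum_rieszProduct (hN : n < N) :
    ∑ c ∈ dyadicCells 2 N, rieszProduct n ε (discreteHaarR N · c) = (2 ^ N) ^ 2 := by
  simp only [rieszProduct_eq_sum_powerset]
  rw [sum_comm, sum_eq_single_of_mem ∅ (empty_mem_powerset _) fun T hT hT₀ => ?_]
  · simp [dyadicCells]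
  · obtain ⟨L, hL, hmax⟩ := T.exists_max_image (fun s => s) (nonempty_iff_ne_empty.2 hT₀)
    have hLN : L < N := by linarith [mem_range.1 (mem_powerset.1 hT hL)]
    simpa using
      sum_mul_prod_layerSum_eq_zero_of_max hL hmax hLN (fun _ => 1) fun _ _ _ _ => rfl

lemma sum_haarSum_mul_rieszProduct (hN : n < N) (α : DyadicRect 2 → ℝ) :
    ∑ c ∈ dyadicCells 2 N, (∑ R ∈ rectsGe 2 n, α R * discreteHaarR N R c) *
        rieszProduct n ε (discreteHaarR N · c) =
      2 ^ (2 * N - n - 1) * ∑ R ∈ rectsEq 2 n, ε R * α R := by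
  simp only [sum_mul, mul_assoc]
  rw [sum_comm]
  simp only [← mul_sum]
  rw [sum_congr rfl fun R hR => by rw [sum_discreteHaarR_mul_rieszProduct hR hN], mul_sum]
  simp only [mul_ite, mul_zero]
  rw [sum_ite_mem, inter_eq_right.2 (rectsEq_subset_rectsGe 2 n)]
  exact sum_congr rfl fun R _ => by ring

end TwoDim

end DyadicHaar

open DyadicHaar in
theorem riesz_product_two_dim_general (n : ℕ)
    (ε : ((Fin 2 → ℕ) × (Fin 2 → ℕ)) → ℝ)
    (hε : ∀ R ∈ rectsEq 2 n, ε R = 1 ∨ ε R = -1)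
    (Ψ : (Fin 2 → ℝ) → ℝ)
    (hΨ : ∀ x, Ψ x = ∏ s ∈ Finset.range (n + 1),
      (1 + (∑ R ∈ (rectsEq 2 n).filter (fun R => R.1 0 = s ∧ R.1 1 = n - s),
        ε R * haarR R x) / 2)) :
    (∀ x ∈ unitCube 2, 0 ≤ Ψ x) ∧
    (∫ x in unitCube 2, Ψ x) = 1 ∧
    (∀ α : ((Fin 2 → ℕ) × (Fin 2 → ℕ)) → ℝ,
      (∫ x in unitCube 2, (∑ R ∈ rectsGe 2 n, α R * haarR R x) * Ψ x) =
        (2 : ℝ) ^ (-(n : ℝ) - 1) * ∑ R ∈ rectsEq 2 n, ε R * α R) := by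
  have hN : n < n + 1 := n.lt_succ_self
  have hH : ∀ c ∈ dyadicCells 2 (n + 1), ∀ x ∈ dyadicBox (n + 1) c, ∀ R ∈ rectsGe 2 n,
      haarR R x = discreteHaarR (n + 1) R c := fun c _ x hx R hR =>
    haarR_eq_discreteHaarR (fun i => (le_of_mem_rectsGe hR i).trans_lt hN) hx
  have hΨc : ∀ c ∈ dyadicCells 2 (n + 1), ∀ x ∈ dyadicBox (n + 1) c,
      Ψ x = rieszProduct n ε (discreteHaarR (n + 1) · c) := fun c hc x hx =>
    (hΨ x).trans (rieszProduct_congr fun R hR => hH c hc x hx R (rectsEq_subset_rectsGe 2 n hR))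
  have hscale :
      ((2 : ℝ) ^ (n + 1))⁻¹ ^ 2 * 2 ^ (2 * (n + 1) - n - 1) = 2 ^ (-(n : ℝ) - 1) := by
    rw [show 2 * (n + 1) - n - 1 = n + 1 by omega, show -(n : ℝ) - 1 = -((n + 1 : ℕ) : ℝ) by
      push_cast; ring, Real.rpow_neg zero_le_two, Real.rpow_natCast]
    field_simp
  refine ⟨fun x _ => (hΨ x).symm ▸ rieszProduct_nonneg (fun R hR => ?_) x, ?_, fun α => ?_⟩
  · rcases hε R hR with h | h <;> simp [h]
  · rw [setIntegral_unitCube_eq_sum _ _ hΨc, sum_rieszProduct hN]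
    field_simp
  · rw [setIntegral_unitCube_eq_sum _ _ fun c hc x hx => by
      rw [hΨc c hc x hx, Finset.sum_congr rfl fun R hR => by rw [hH c hc x hx R hR]],
      sum_haarSum_mul_rieszProduct hN, ← mul_assoc, hscale]

/-- **Temlyakov's Riesz product (proof of Talagrand's theorem in dimension 2).**
The Riesz product `Ψ = ∏_{s=0}^n (1 + ψ_s/2)`, built from the signs `ε`, is nonnegative,
has integral one, and computes the inner product with the hyperbolic Haar sum. -/
theorem riesz_product_two_dim (n : ℕ) (hn : 1 ≤ n)
    (ε : ((Fin 2 → ℕ) × (Fin 2 → ℕ)) → ℝ)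
    (hε : ∀ R ∈ rectsEq 2 n, ε R = 1 ∨ ε R = -1)
    (Ψ : (Fin 2 → ℝ) → ℝ)
    (hΨ : ∀ x, Ψ x = ∏ s ∈ Finset.range (n + 1),
      (1 + (∑ R ∈ (rectsEq 2 n).filter (fun R => R.1 0 = s ∧ R.1 1 = n - s),
        ε R * haarR R x) / 2)) :
    (∀ x ∈ unitCube 2, 0 ≤ Ψ x) ∧
    (∫ x in unitCube 2, Ψ x) = 1 ∧
    (∀ α : ((Fin 2 → ℕ) × (Fin 2 → ℕ)) → ℝ,
      (∫ x in unitCube 2, (∑ R ∈ rectsGe 2 n, α R * haarR R x) * Ψ x) =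
        (2 : ℝ) ^ (-(n : ℝ) - 1) * ∑ R ∈ rectsEq 2 n, ε R * α R) :=
  riesz_product_two_dim_general n ε hε Ψ hΨ
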